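/- Let ⇀ and ↝ be binary relations on a type α satisfying the local swapping property, and assume ↝ is strongly normalizing on all of α: there is no infinite sequence x₀, x₁, x₂, … with xᵢ ↝ xᵢ₊₁ for all i. Let → = ⇀ ∪ ↝. Then any element a admitting an infinite →-reduction sequence also admits an infinite ⇀-reduction sequence; equivalently, if a is ⇀-strongly normalizing then a is →-strongly normalizing. -/

import Mathlib

/-!
A `↝`-step followed by a `⇀`-step can be traded for a `⇀`-step followed by finitely many
`→`-steps. Since `↝` is strongly normalizing, an infinite `→`-reduction from `a` starts with
`a ↝* b ⇀ c` and continues infinitely from `c`; pushing the `⇀`-step to the front through the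
`↝*`-prefix gives `a ⇀ d →* c`, so `d` again has an infinite `→`-reduction. Dependent choice
iterates this into an infinite `⇀`-reduction from `a`.
-/

namespace Relation

variable {α : Type*}

def InfiniteChainFrom (r : α → α → Prop) (a : α) : Prop :=
  ∃ f : ℕ → α, f 0 = a ∧ ∀ i, r (f i) (f (i + 1))

/-- `rs` is the surface reduction `⇀`, `rn` the non-surface reduction `↝`. -/
def LocalSwap (rs rn : α → α → Prop) : Prop :=
  ∀ a b c, rn a b → rs b c →
    (∃ d, TransGen rs a d ∧ (d = c ∨ rn d c)) ∨ (∃ d, rs a d ∧ ReflTransGen rn d c)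

namespace InfiniteChainFrom

variable {r : α → α → Prop}

theorem head {a b : α} (hab : r a b) (hb : InfiniteChainFrom r b) : InfiniteChainFrom r a := by
  obtain ⟨f, rfl, hf⟩ := hb
  refine ⟨fun n => Nat.casesOn n a f, rfl, ?_⟩
  rintro (_ | i)
  · exact hab
  · exact hf i

theorem head_reflTransGen {a b : α} (hab : ReflTransGen r a b) (hb : InfiniteChainFrom r b) :
    InfiniteChainFrom r a := by
  induction hab using ReflTransGen.head_induction_on with
  | refl => exact hb
  | head hac _ ih => exact head hac ih

theorem of_forall_exists (P : α → Prop) (hP : ∀ x, P x → ∃ y, r x y ∧ P y) {a : α}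
    (ha : P a) : InfiniteChainFrom r a := by
  choose next hnext using fun x : Subtype P =>
    let ⟨y, hxy, hy⟩ := hP x.1 x.2; (⟨⟨y, hy⟩, hxy⟩ : ∃ y : Subtype P, r x y)
  refine ⟨fun n => (next^[n] ⟨a, ha⟩).1, rfl, fun i => ?_⟩
  simpa only [Function.iterate_succ_apply'] using hnext _

theorem exists_reflTransGen_rs {rs rn : α → α → Prop} {a : α}
    (ha : InfiniteChainFrom (rs ⊔ rn) a) (hsn : ¬ InfiniteChainFrom rn a) :
    ∃ b c, ReflTransGen rn a b ∧ rs b c ∧ InfiniteChainFrom (rs ⊔ rn) c := by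
  classical
  obtain ⟨f, rfl, hf⟩ := ha
  have hex : ∃ k, rs (f k) (f (k + 1)) := by
    by_contra! h
    exact hsn ⟨f, rfl, fun i => (hf i).resolve_left (h i)⟩
  have hprefix : ∀ m ≤ Nat.find hex, ReflTransGen rn (f 0) (f m) := by
    intro m
    induction m with
    | zero => exact fun _ => ReflTransGen.refl
    | succ m ih =>
      intro hm
      exact (ih (m.le_succ.trans hm)).tail ((hf m).resolve_left (Nat.find_min hex hm))
  exact ⟨_, _, hprefix _ le_rfl, Nat.find_spec hex,
    fun i => f (Nat.find hex + 1 + i), rfl, fun i => hf _⟩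

end InfiniteChainFrom

namespace LocalSwap

variable {rs rn : α → α → Prop}

theorem exists_rs_reflTransGen (hswap : LocalSwap rs rn) {a b c : α} (hab : rn a b)
    (hbc : rs b c) : ∃ d, rs a d ∧ ReflTransGen (rs ⊔ rn) d c := by
  rcases hswap a b c hab hbc with ⟨d, had, hdc⟩ | ⟨d, had, hdc⟩
  · obtain ⟨e, hae, hed⟩ := TransGen.head'_iff.mp had
    have hed' : ReflTransGen (rs ⊔ rn) e d := ReflTransGen.mono le_sup_left _ _ hed
    rcases hdc with rfl | hdc
    · exact ⟨e, hae, hed'⟩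
    · exact ⟨e, hae, hed'.tail (Or.inr hdc)⟩
  · exact ⟨d, had, ReflTransGen.mono le_sup_right _ _ hdc⟩

theorem exists_rs_reflTransGen_of_reflTransGen (hswap : LocalSwap rs rn) {a b c : α}
    (hab : ReflTransGen rn a b) (hbc : rs b c) : ∃ d, rs a d ∧ ReflTransGen (rs ⊔ rn) d c := by
  induction hab using ReflTransGen.head_induction_on with
  | refl => exact ⟨c, hbc, ReflTransGen.refl⟩
  | head hae _ ih =>
    obtain ⟨d, hed, hdc⟩ := ih
    obtain ⟨d', had', hd'd⟩ := hswap.exists_rs_reflTransGen hae hed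
    exact ⟨d', had', hd'd.trans hdc⟩

theorem exists_rs_infiniteChainFrom (hswap : LocalSwap rs rn)
    (hsn : ∀ x, ¬ InfiniteChainFrom rn x) {a : α} (ha : InfiniteChainFrom (rs ⊔ rn) a) :
    ∃ d, rs a d ∧ InfiniteChainFrom (rs ⊔ rn) d := by
  obtain ⟨b, c, hab, hbc, hc⟩ := ha.exists_reflTransGen_rs (hsn a)
  obtain ⟨d, had, hdc⟩ := hswap.exists_rs_reflTransGen_of_reflTransGen hab hbc
  exact ⟨d, had, hc.head_reflTransGen hdc⟩

theorem infiniteChainFrom_of_sup (hswap : LocalSwap rs rn)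
    (hsn : ∀ x, ¬ InfiniteChainFrom rn x) {a : α} (ha : InfiniteChainFrom (rs ⊔ rn) a) :
    InfiniteChainFrom rs a :=
  InfiniteChainFrom.of_forall_exists _ (fun _ => hswap.exists_rs_infiniteChainFrom hsn) ha

end LocalSwap

end Relation

/-- claim (b) of Theorem 2. With local swapping and strong
normalization of `↝` (rn), an infinite `→`-reduction from `a` yields an
infinite `⇀`-reduction from `a`, where `→ = ⇀ ∪ ↝`. -/
theorem infinite_union_gives_infinite_surface {α : Type*} (rs rn : α → α → Prop)
    (hswap : ∀ a b c, rn a b → rs b c →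
      (∃ d, Relation.TransGen rs a d ∧ (d = c ∨ rn d c)) ∨
      (∃ d, rs a d ∧ Relation.ReflTransGen rn d c))
    (hsn : ¬ ∃ f : ℕ → α, ∀ i, rn (f i) (f (i + 1))) :
    ∀ a : α,
      (∃ f : ℕ → α, f 0 = a ∧ ∀ i, (rs (f i) (f (i + 1)) ∨ rn (f i) (f (i + 1)))) →
      ∃ g : ℕ → α, g 0 = a ∧ ∀ i, rs (g i) (g (i + 1)) :=
  fun _ ha => Relation.LocalSwap.infiniteChainFrom_of_sup hswap
    (fun _ ⟨f, _, hf⟩ => hsn ⟨f, hf⟩) ha
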